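/- arXiv:1506.02447 — 6 statements merged into one kernel-verified Lean document; each statement's English description precedes it below -/
import Mathlib

section
/- Let j : z → so(v) be of Heisenberg type, dim z = r, and let Z₁,…,Z_ℓ be elements of an orthonormal basis of z with 1 ≤ ℓ < r. Then Tr(j_{Z₁} ∘ ⋯ ∘ j_{Z_ℓ}) = 0. -/
/-!
The images under `j` of orthogonal vectors anticommute (polarize `j_Z² = -‖Z‖²`), and an
operator `P` anticommuting with an invertible `A` is traceless, since
`tr P = tr (A⁻¹ (A P)) = -tr (A⁻¹ P A) = -tr P`.  If `ℓ` is odd, `ℓ < r` leaves a basis vector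
`Z_α` different from all `Z_i`, and `j_{Z_α}` anticommutes with each of the `ℓ` factors, hence with
their product.  If `ℓ` is even, `j_{Z₁}` anticommutes with the product of the remaining odd number
of factors, hence with the whole product.
-/

open scoped RealInnerProductSpace

theorem mul_list_prod_of_anticomm {R : Type*} [Ring R] (a : R) (L : List R)
    (h : ∀ x ∈ L, a * x = -(x * a)) :
    a * L.prod = (-1) ^ L.length * (L.prod * a) := by
  induction L with
  | nil => simp
  | cons x L ih =>
    rw [List.prod_cons, List.length_cons, pow_succ, ← mul_assoc, h x List.mem_cons_self,
      neg_mul, mul_assoc, ih fun y hy => h y (List.mem_cons_of_mem x hy),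
      ← mul_assoc x, ← ((Commute.neg_one_left x).pow_left _).eq]
    simp only [mul_assoc, mul_neg, neg_mul, mul_one]

theorem mul_prod_ofFn_of_anticomm_of_odd {R : Type*} [Ring R] {n : ℕ} (hn : Odd n) (a : R)
    (g : Fin n → R) (h : ∀ i, a * g i = -(g i * a)) :
    a * (List.ofFn g).prod = -((List.ofFn g).prod * a) := by
  rw [mul_list_prod_of_anticomm, List.length_ofFn, hn.neg_one_pow, neg_one_mul]
  simpa only [List.mem_ofFn, forall_exists_index, forall_apply_eq_imp_iff] using h

theorem LinearMap.trace_eq_zero_of_isUnit_of_anticomm {R M : Type*} [CommRing R]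
    [IsAddTorsionFree R] [AddCommGroup M] [Module R M] {A P : Module.End R M}
    (hA : IsUnit A) (hAP : A * P = -(P * A)) : LinearMap.trace R M P = 0 := by
  obtain ⟨u, rfl⟩ := hA
  refine self_eq_neg.mp ?_
  calc LinearMap.trace R M P = LinearMap.trace R M (↑u⁻¹ * (↑u * P)) := by
        rw [← mul_assoc, Units.inv_mul, one_mul]
    _ = -LinearMap.trace R M (P * ↑u * ↑u⁻¹) := by
        rw [hAP, mul_neg, map_neg, LinearMap.trace_mul_comm]
    _ = -LinearMap.trace R M P := by rw [mul_assoc, Units.mul_inv, mul_one]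

section HeisenbergType

variable {V Z : Type*} [AddCommGroup V] [Module ℝ V]
  [NormedAddCommGroup Z] [InnerProductSpace ℝ Z] (j : Z →ₗ[ℝ] Module.End ℝ V)
  (hheis : ∀ z : Z, j z * j z = -(‖z‖ ^ 2 : ℝ) • (1 : Module.End ℝ V))
include hheis

theorem heisenberg_mul_add_mul_swap (z w : Z) :
    j z * j w + j w * j z = -(2 * ⟪z, w⟫) • (1 : Module.End ℝ V) := by
  have hzw := hheis (z + w)
  rw [map_add, norm_add_sq_real, add_mul, mul_add, mul_add, hheis z, hheis w] at hzw
  rw [← sub_eq_zero, ← sub_eq_zero.mpr hzw]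
  module

theorem heisenberg_anticomm_of_inner_eq_zero {z w : Z} (h : ⟪z, w⟫ = 0) :
    j z * j w = -(j w * j z) := by
  have := heisenberg_mul_add_mul_swap j hheis z w
  rwa [h, mul_zero, neg_zero, zero_smul, add_eq_zero_iff_eq_neg] at this

theorem heisenberg_mul_self_of_norm_eq_one {z : Z} (h : ‖z‖ = 1) : j z * j z = -1 := by
  rw [hheis z, h]
  simp

end HeisenbergType

theorem stmt5_general {V Z : Type*}
    [NormedAddCommGroup V] [InnerProductSpace ℝ V]
    [NormedAddCommGroup Z] [InnerProductSpace ℝ Z]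
    (j : Z →ₗ[ℝ] Module.End ℝ V)
    (hheis : ∀ z : Z, j z * j z = -(‖z‖ ^ 2 : ℝ) • (1 : Module.End ℝ V))
    (r ℓ : ℕ) (b : OrthonormalBasis (Fin r) ℝ Z)
    (f : Fin ℓ → Fin r) (hf : Function.Injective f)
    (h1 : 1 ≤ ℓ) (h2 : ℓ < r) :
    LinearMap.trace ℝ V (List.ofFn fun i => j (b (f i))).prod = 0 := by
  have hsq (i : Fin r) : j (b i) * j (b i) = -1 :=
    heisenberg_mul_self_of_norm_eq_one j hheis (b.orthonormal.1 i)
  have hunit (i : Fin r) : IsUnit (j (b i)) :=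
    ⟨⟨j (b i), -j (b i), by rw [mul_neg, hsq, neg_neg], by rw [neg_mul, hsq, neg_neg]⟩, rfl⟩
  have hanti {i k : Fin r} (hik : i ≠ k) : j (b i) * j (b k) = -(j (b k) * j (b i)) :=
    heisenberg_anticomm_of_inner_eq_zero j hheis (b.orthonormal.2 hik)
  rcases Nat.even_or_odd ℓ with heven | hodd
  · obtain ⟨n, rfl⟩ : ∃ n, ℓ = n + 1 := ⟨ℓ - 1, by omega⟩
    have hn : Odd n := Nat.not_even_iff_odd.mp (Nat.even_add_one.mp heven)
    rw [List.ofFn_succ, List.prod_cons]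
    set Q := (List.ofFn fun i : Fin n => j (b (f i.succ))).prod
    have hQ : j (b (f 0)) * Q = -(Q * j (b (f 0))) :=
      mul_prod_ofFn_of_anticomm_of_odd hn _ _ fun i => hanti (hf.ne (Fin.succ_ne_zero i).symm)
    refine LinearMap.trace_eq_zero_of_isUnit_of_anticomm (hunit (f 0)) ?_
    conv_lhs => rw [hQ, mul_neg, ← mul_assoc]
  · obtain ⟨α, hα⟩ : ∃ α, α ∉ Set.range f := by
      by_contra! hsurj
      have := Fintype.card_le_of_surjective f hsurj
      simp only [Fintype.card_fin] at this
      omega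
    exact LinearMap.trace_eq_zero_of_isUnit_of_anticomm (hunit α) <|
      mul_prod_ofFn_of_anticomm_of_odd hodd _ _ fun i => hanti fun h => hα ⟨i, h.symm⟩

/-- For `j : z → so(v)` of Heisenberg type with `dim z = r` and `Z₁,…,Z_ℓ` distinct
elements of an orthonormal basis of `z` with `1 ≤ ℓ < r`,
`Tr(j_{Z₁} ∘ ⋯ ∘ j_{Z_ℓ}) = 0`. -/
theorem stmt5 {V Z : Type*}
    [NormedAddCommGroup V] [InnerProductSpace ℝ V] [FiniteDimensional ℝ V]
    [NormedAddCommGroup Z] [InnerProductSpace ℝ Z] [FiniteDimensional ℝ Z]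
    (j : Z →ₗ[ℝ] Module.End ℝ V)
    (hskew : ∀ (z : Z) (x y : V), ⟪j z x, y⟫ = -⟪x, j z y⟫)
    (hheis : ∀ z : Z, j z * j z = -(‖z‖ ^ 2 : ℝ) • (1 : Module.End ℝ V))
    (r ℓ : ℕ) (b : OrthonormalBasis (Fin r) ℝ Z)
    (f : Fin ℓ → Fin r) (hf : Function.Injective f)
    (h1 : 1 ≤ ℓ) (h2 : ℓ < r) :
    LinearMap.trace ℝ V (List.ofFn fun i => j (b (f i))).prod = 0 :=
  stmt5_general j hheis r ℓ b f hf h1 h2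
end

section
/- Let j : z → so(v) be of Heisenberg type, {Z₁,…,Z_r} an orthonormal basis of z, and E_{Z_α} := Σ_k X_k ∧ j_{Z_α} X_k ∈ v∧v. Then {E_{Z₁},…,E_{Z_r}} is an orthogonal set of vectors, each of norm √(2m), where m = dim v. -/
open scoped RealInnerProductSpace

/-!
Write `J_α = j (Z_α)`. Skew-symmetry moves `J_β` across each inner product, after which both
terms of the double sum collapse by Parseval to `⟪J_β X_k, J_α X_k⟫`, so the sum equals
`2 ∑_k ⟪J_α X_k, J_β X_k⟫`. Polarizing `‖j Z x‖² = ‖Z‖² ‖x‖²` gives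
`⟪j Z x, j W x⟫ = ⟪Z, W⟫ ‖x‖²`, and orthonormality of the two bases finishes.
-/

section Skew

variable {V : Type*} [NormedAddCommGroup V] [InnerProductSpace ℝ V]

lemma inner_apply_self_of_comp_self_eq_neg_smul {T : V →ₗ[ℝ] V}
    (hskew : ∀ x y : V, ⟪T x, y⟫ = -⟪x, T y⟫) {c : ℝ} (hsq : T ∘ₗ T = -c • LinearMap.id)
    (x : V) : ⟪T x, T x⟫ = c * ‖x‖ ^ 2 := by
  have hTT : T (T x) = -c • x := by simpa using LinearMap.congr_fun hsq x
  rw [hskew, hTT, inner_smul_right, real_inner_self_eq_norm_sq]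
  ring

lemma sum_inner_wedge_of_skew {ι : Type*} [Fintype ι] (X : OrthonormalBasis ι ℝ V)
    (A B : V →ₗ[ℝ] V) (hB : ∀ x y : V, ⟪B x, y⟫ = -⟪x, B y⟫) (x : V) :
    ∑ l, (⟪x, X l⟫ * ⟪A x, B (X l)⟫ - ⟪x, B (X l)⟫ * ⟪A x, X l⟫)
      = 2 * ⟪A x, B x⟫ := by
  have parseval (u w : V) : ∑ l, ⟪u, X l⟫ * ⟪X l, w⟫ = ⟪u, w⟫ := X.sum_inner_mul_inner u w
  have hBA : ⟪x, B (A x)⟫ = -⟪A x, B x⟫ := by rw [← hB, real_inner_comm]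
  calc ∑ l, (⟪x, X l⟫ * ⟪A x, B (X l)⟫ - ⟪x, B (X l)⟫ * ⟪A x, X l⟫)
      = -∑ l, ⟪x, X l⟫ * ⟪X l, B (A x)⟫ + ∑ l, ⟪B x, X l⟫ * ⟪X l, A x⟫ := by
        rw [← Finset.sum_neg_distrib, ← Finset.sum_add_distrib]
        refine Finset.sum_congr rfl fun l _ => ?_
        have hAB : ⟪A x, B (X l)⟫ = -⟪X l, B (A x)⟫ := by rw [real_inner_comm, hB]
        have hxB : ⟪x, B (X l)⟫ = -⟪B x, X l⟫ := by rw [hB, neg_neg]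
        rw [hAB, hxB, real_inner_comm (A x) (X l)]
        ring
    _ = 2 * ⟪A x, B x⟫ := by
        rw [parseval, parseval, hBA, real_inner_comm (B x)]
        ring

end Skew

section HeisenbergType

variable {V Z : Type*} [NormedAddCommGroup V] [InnerProductSpace ℝ V]
  [NormedAddCommGroup Z] [InnerProductSpace ℝ Z] {j : Z →ₗ[ℝ] V →ₗ[ℝ] V}

lemma inner_apply_apply_of_heisenberg (hskew : ∀ (z : Z) (x y : V), ⟪j z x, y⟫ = -⟪x, j z y⟫)
    (hheis : ∀ z : Z, j z ∘ₗ j z = -(‖z‖ ^ 2 : ℝ) • (LinearMap.id : V →ₗ[ℝ] V))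
    (z w : Z) (x : V) : ⟪j z x, j w x⟫ = ⟪z, w⟫ * ‖x‖ ^ 2 := by
  have hnorm (u : Z) : ⟪j u x, j u x⟫ = ‖u‖ ^ 2 * ‖x‖ ^ 2 :=
    inner_apply_self_of_comp_self_eq_neg_smul (hskew u) (hheis u) x
  have hsum := hnorm (z + w)
  rw [map_add, LinearMap.add_apply, real_inner_add_add_self, norm_add_sq_real, hnorm z,
    hnorm w] at hsum
  linarith

end HeisenbergType

theorem stmt7_general {V Z : Type*}
    [NormedAddCommGroup V] [InnerProductSpace ℝ V]
    [NormedAddCommGroup Z] [InnerProductSpace ℝ Z]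
    (j : Z →ₗ[ℝ] (V →ₗ[ℝ] V))
    (hskew : ∀ (z : Z) (x y : V), ⟪j z x, y⟫ = -⟪x, j z y⟫)
    (hheis : ∀ z : Z, j z ∘ₗ j z = -(‖z‖ ^ 2 : ℝ) • (LinearMap.id : V →ₗ[ℝ] V))
    (m r : ℕ) (X : OrthonormalBasis (Fin m) ℝ V) (b : OrthonormalBasis (Fin r) ℝ Z) :
    ∀ α β : Fin r,
      ∑ k : Fin m, ∑ l : Fin m,
        (⟪X k, X l⟫ * ⟪j (b α) (X k), j (b β) (X l)⟫
          - ⟪X k, j (b β) (X l)⟫ * ⟪j (b α) (X k), X l⟫)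
      = if α = β then 2 * m else 0 := by
  intro α β
  simp only [sum_inner_wedge_of_skew X _ _ (hskew (b β)),
    inner_apply_apply_of_heisenberg hskew hheis, X.orthonormal.1,
    orthonormal_iff_ite.mp b.orthonormal]
  split_ifs <;> simp [mul_comm]

/-- For `j : z → so(v)` of Heisenberg type, `{Z₁,…,Z_r}` an orthonormal basis of `z` and
`E_{Z_α} = Σ_k X_k ∧ j_{Z_α} X_k ∈ v∧v`, the set `{E_{Z₁},…,E_{Z_r}}` is orthogonal and
each vector has norm `√(2m)`: the inner product `⟨E_{Z_α}, E_{Z_β}⟩`, written out as a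
double sum via `⟨X∧Y,U∧W⟩ = ⟨X,U⟩⟨Y,W⟩ - ⟨X,W⟩⟨Y,U⟩`, equals `2m` if `α = β`
and `0` otherwise. -/
theorem stmt7 {V Z : Type*}
    [NormedAddCommGroup V] [InnerProductSpace ℝ V] [FiniteDimensional ℝ V]
    [NormedAddCommGroup Z] [InnerProductSpace ℝ Z] [FiniteDimensional ℝ Z]
    (j : Z →ₗ[ℝ] (V →ₗ[ℝ] V))
    (hskew : ∀ (z : Z) (x y : V), ⟪j z x, y⟫ = -⟪x, j z y⟫)
    (hheis : ∀ z : Z, j z ∘ₗ j z = -(‖z‖ ^ 2 : ℝ) • (LinearMap.id : V →ₗ[ℝ] V))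
    (m r : ℕ) (X : OrthonormalBasis (Fin m) ℝ V) (b : OrthonormalBasis (Fin r) ℝ Z) :
    ∀ α β : Fin r,
      ∑ k : Fin m, ∑ l : Fin m,
        (⟪X k, X l⟫ * ⟪j (b α) (X k), j (b β) (X l)⟫
          - ⟪X k, j (b β) (X l)⟫ * ⟪j (b α) (X k), X l⟫)
      = if α = β then 2 * m else 0 :=
  stmt7_general j hskew hheis m r X b
end

section
/- Let j : z → so(v) be of Heisenberg type with dim z = r, {Z_α} an orthonormal basis of z, and define Φ : v∧v → v∧v by Φ(X∧Y) = Σ_{α=1}^r j_{Z_α}X ∧ j_{Z_α}Y (extended linearly). Then for every Z ∈ z, Φ(E_Z) = (2-r)·E_Z, where E_Z = Σ_k X_k ∧ j_Z X_k. -/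
/-!
Write `E(A) = Σ_k X_k ∧ A X_k` for an endomorphism `A` of `v`. This is linear in `A` and does
not depend on the orthonormal basis `{X_k}`. For a unit vector `Z_α`, `j_{Z_α}` is an orthogonal
complex structure, so `{j_{Z_α} X_k}_k` is again an orthonormal basis, and the Heisenberg relation
gives `j_{Z_α} j_Z = (2⟨Z_α, Z⟩ j_{Z_α} - j_Z) j_{Z_α}`. Hence the `α`-th summand of `Φ(E_Z)` is
`E(2⟨Z_α, Z⟩ j_{Z_α} - j_Z)`, and summing over `α` gives `2 E(j_Z) - r E(j_Z)`.
-/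

open scoped RealInnerProductSpace

namespace OrthonormalBasis

variable {V M ι κ : Type*} [NormedAddCommGroup V] [InnerProductSpace ℝ V]
  [AddCommGroup M] [Module ℝ M] [Fintype ι] [Fintype κ]

noncomputable def bilinSum (B : V →ₗ[ℝ] V →ₗ[ℝ] M) (X : OrthonormalBasis ι ℝ V) :
    (V →ₗ[ℝ] V) →ₗ[ℝ] M :=
  ∑ k, B (X k) ∘ₗ LinearMap.applyₗ (X k)

@[simp]
theorem bilinSum_apply (B : V →ₗ[ℝ] V →ₗ[ℝ] M) (X : OrthonormalBasis ι ℝ V) (A : V →ₗ[ℝ] V) :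
    X.bilinSum B A = ∑ k, B (X k) (A (X k)) := by
  simp [bilinSum]

theorem bilinSum_eq (B : V →ₗ[ℝ] V →ₗ[ℝ] M) (X : OrthonormalBasis ι ℝ V)
    (Y : OrthonormalBasis κ ℝ V) : X.bilinSum B = Y.bilinSum B := by
  ext A
  simp only [bilinSum_apply]
  calc ∑ k, B (X k) (A (X k))
      = ∑ k, B (X k) (A (∑ l, ⟪Y l, X k⟫ • Y l)) := by simp only [Y.sum_repr']
    _ = ∑ l, B (∑ k, ⟪X k, Y l⟫ • X k) (A (Y l)) := by
        simp only [map_sum, map_smul, LinearMap.sum_apply, LinearMap.smul_apply,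
          real_inner_comm (X _)]
        exact Finset.sum_comm
    _ = ∑ l, B (Y l) (A (Y l)) := by simp only [X.sum_repr']

end OrthonormalBasis

def HeisenbergRelation {V Z : Type*} [NormedAddCommGroup V] [InnerProductSpace ℝ V]
    [NormedAddCommGroup Z] [InnerProductSpace ℝ Z] (j : Z →ₗ[ℝ] (V →ₗ[ℝ] V)) : Prop :=
  ∀ z w : Z, j z ∘ₗ j w + j w ∘ₗ j z = -(2 * ⟪z, w⟫) • (LinearMap.id : V →ₗ[ℝ] V)

namespace HeisenbergRelation

variable {V Z : Type*} [NormedAddCommGroup V] [InnerProductSpace ℝ V]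
  [NormedAddCommGroup Z] [InnerProductSpace ℝ Z] {j : Z →ₗ[ℝ] (V →ₗ[ℝ] V)}

theorem apply_apply_add_apply_apply (hheis : HeisenbergRelation j) (z w : Z) (x : V) :
    j z (j w x) + j w (j z x) = -(2 * ⟪z, w⟫) • x :=
  LinearMap.congr_fun (hheis z w) x

theorem apply_apply_self (hheis : HeisenbergRelation j) {w : Z} (hw : ‖w‖ = 1) (x : V) :
    j w (j w x) = -x := by
  have h := hheis.apply_apply_add_apply_apply w w x
  rw [real_inner_self_eq_norm_sq, hw, ← two_smul ℝ] at h
  simpa [smul_smul] using congrArg ((2 : ℝ)⁻¹ • ·) h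

theorem inner_apply_apply (hheis : HeisenbergRelation j)
    (hskew : ∀ (z : Z) (x y : V), ⟪j z x, y⟫ = -⟪x, j z y⟫) {w : Z} (hw : ‖w‖ = 1) (x y : V) :
    ⟪j w x, j w y⟫ = ⟪x, y⟫ := by
  rw [hskew, hheis.apply_apply_self hw, inner_neg_right, neg_neg]

noncomputable def complexStructure (hheis : HeisenbergRelation j)
    (hskew : ∀ (z : Z) (x y : V), ⟪j z x, y⟫ = -⟪x, j z y⟫) {w : Z} (hw : ‖w‖ = 1) :
    V ≃ₗᵢ[ℝ] V :=
  (LinearEquiv.ofLinearMap (j w) (-j w)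
      (by ext x; simp [hheis.apply_apply_self hw])
      (by ext x; simp [hheis.apply_apply_self hw])).isometryOfInner
    (hheis.inner_apply_apply hskew hw)

@[simp]
theorem complexStructure_apply (hheis : HeisenbergRelation j)
    (hskew : ∀ (z : Z) (x y : V), ⟪j z x, y⟫ = -⟪x, j z y⟫) {w : Z} (hw : ‖w‖ = 1) (x : V) :
    hheis.complexStructure hskew hw x = j w x :=
  rfl

theorem apply_apply_eq (hheis : HeisenbergRelation j) {w : Z} (hw : ‖w‖ = 1) (z : Z) (x : V) :
    j w (j z x) = ((2 * ⟪w, z⟫) • j w - j z) (j w x) := by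
  have h := hheis.apply_apply_add_apply_apply w z x
  simp only [LinearMap.sub_apply, LinearMap.smul_apply, hheis.apply_apply_self hw, smul_neg,
    ← neg_smul]
  exact eq_sub_of_add_eq h

end HeisenbergRelation

namespace ExteriorAlgebra

noncomputable def wedge (V : Type*) [AddCommGroup V] [Module ℝ V] :
    V →ₗ[ℝ] V →ₗ[ℝ] ExteriorAlgebra ℝ V :=
  (LinearMap.mul ℝ (ExteriorAlgebra ℝ V)).compl₁₂ (ι ℝ) (ι ℝ)

@[simp]
theorem wedge_apply {V : Type*} [AddCommGroup V] [Module ℝ V] (x y : V) :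
    wedge V x y = ι ℝ x * ι ℝ y :=
  rfl

end ExteriorAlgebra

theorem stmt8_general {V Z : Type*}
    [NormedAddCommGroup V] [InnerProductSpace ℝ V]
    [NormedAddCommGroup Z] [InnerProductSpace ℝ Z]
    (j : Z →ₗ[ℝ] (V →ₗ[ℝ] V))
    (hskew : ∀ (z : Z) (x y : V), ⟪j z x, y⟫ = -⟪x, j z y⟫)
    (hheis : ∀ z w : Z, j z ∘ₗ j w + j w ∘ₗ j z
      = -(2 * ⟪z, w⟫) • (LinearMap.id : V →ₗ[ℝ] V))
    (m r : ℕ) (X : OrthonormalBasis (Fin m) ℝ V) (b : OrthonormalBasis (Fin r) ℝ Z)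
    (z : Z) :
    ∑ α : Fin r, ∑ k : Fin m,
        ExteriorAlgebra.ι ℝ (j (b α) (X k)) * ExteriorAlgebra.ι ℝ (j (b α) (j z (X k)))
      = ((2 : ℝ) - r) • ∑ k : Fin m,
          ExteriorAlgebra.ι ℝ (X k) * ExteriorAlgebra.ι ℝ (j z (X k)) := by
  replace hheis : HeisenbergRelation j := hheis
  set E := X.bilinSum (ExteriorAlgebra.wedge V)
  have summand (α : Fin r) :
      ∑ k, ExteriorAlgebra.ι ℝ (j (b α) (X k)) * ExteriorAlgebra.ι ℝ (j (b α) (j z (X k)))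
        = E ((2 * ⟪b α, z⟫) • j (b α) - j z) := by
    have hα := b.orthonormal.1 α
    let Y := X.map (hheis.complexStructure hskew hα)
    rw [show E = Y.bilinSum (ExteriorAlgebra.wedge V) from X.bilinSum_eq _ Y]
    simp only [Y, OrthonormalBasis.bilinSum_apply, OrthonormalBasis.map_apply,
      HeisenbergRelation.complexStructure_apply, ExteriorAlgebra.wedge_apply,
      hheis.apply_apply_eq hα z]
  have hE : E (j z) = ∑ α, ⟪b α, z⟫ • E (j (b α)) := by
    conv_lhs => rw [← b.sum_repr' z]
    simp only [map_sum, map_smul]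
  calc _ = ∑ α, E ((2 * ⟪b α, z⟫) • j (b α) - j z) := Finset.sum_congr rfl fun α _ => summand α
    _ = (2 : ℝ) • E (j z) - (r : ℝ) • E (j z) := by
        simp only [map_sub, map_smul, Finset.sum_sub_distrib, Finset.sum_const, Finset.card_fin,
          mul_smul, ← Finset.smul_sum, ← hE, Nat.cast_smul_eq_nsmul]
    _ = _ := by simp [sub_smul, E]

/-- For `j : z → so(v)` of Heisenberg type, `dim z = r`, `{Z_α}` an orthonormal basis of
`z`, and `Φ : v∧v → v∧v`, `Φ(X∧Y) = Σ_α j_{Z_α}X ∧ j_{Z_α}Y`, one has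
`Φ(E_Z) = (2-r)·E_Z` for every `Z ∈ z`, where `E_Z = Σ_k X_k ∧ j_Z X_k`.
Here wedges are expressed inside the exterior algebra of `v`
(`X ∧ Y = ι X * ι Y`). -/
theorem stmt8 {V Z : Type*}
    [NormedAddCommGroup V] [InnerProductSpace ℝ V] [FiniteDimensional ℝ V]
    [NormedAddCommGroup Z] [InnerProductSpace ℝ Z] [FiniteDimensional ℝ Z]
    (j : Z →ₗ[ℝ] (V →ₗ[ℝ] V))
    (hskew : ∀ (z : Z) (x y : V), ⟪j z x, y⟫ = -⟪x, j z y⟫)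
    (hheis : ∀ z w : Z, j z ∘ₗ j w + j w ∘ₗ j z
      = -(2 * ⟪z, w⟫) • (LinearMap.id : V →ₗ[ℝ] V))
    (m r : ℕ) (X : OrthonormalBasis (Fin m) ℝ V) (b : OrthonormalBasis (Fin r) ℝ Z)
    (z : Z) :
    ∑ α : Fin r, ∑ k : Fin m,
        ExteriorAlgebra.ι ℝ (j (b α) (X k)) * ExteriorAlgebra.ι ℝ (j (b α) (j z (X k)))
      = ((2 : ℝ) - r) • ∑ k : Fin m,
          ExteriorAlgebra.ι ℝ (X k) * ExteriorAlgebra.ι ℝ (j z (X k)) :=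
  stmt8_general j hskew hheis m r X b z
end

section
/- Let j : ℝ^r → so(ℝ^m) be of Heisenberg type with r odd, and {Z₁,…,Z_r} the standard orthonormal basis. If (α₁,…,α_r) ∈ {1,…,r}^r is not a permutation of (1,…,r) (i.e., the indices are not pairwise distinct), then Tr(j_{Z_{α₁}} ⋯ j_{Z_{α_r}}) = 0. -/
open scoped RealInnerProductSpace

/-- Split a list at the first occurrence of `x`. -/
lemma aux_mem_split_first {β : Type*} [DecidableEq β] {x : β} :
    ∀ {T : List β}, x ∈ T → ∃ M S, T = M ++ x :: S ∧ x ∉ M := by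
  intro T hT
  induction T with
  | nil => simp at hT
  | cons y T ih =>
      by_cases hxy : x = y
      · exact ⟨[], T, by simp [hxy], by simp⟩
      · have hxT : x ∈ T := by
          rcases List.mem_cons.mp hT with h | h
          · exact absurd h hxy
          · exact h
        obtain ⟨M, S, hMS, hxM⟩ := ih hxT
        exact ⟨y :: M, S, by simp [hMS], by simp [hxy, hxM]⟩

section aux

variable {r : ℕ} {A : Type*} [Ring A] (e : Fin r → A)

/-- Moving one `e x` past a list of `e`'s with distinct indices picks up a sign. -/
lemma aux_comm (hac : ∀ i k : Fin r, i ≠ k → e i * e k = -(e k * e i)) :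
    ∀ (M : List (Fin r)) (x : Fin r), x ∉ M →
      e x * (M.map e).prod = ((-1 : ℤ) ^ M.length) • ((M.map e).prod * e x) := by
  intro M
  induction M with
  | nil => intro x _; simp
  | cons y T ih =>
      intro x hx
      have hxy : x ≠ y := fun h => hx (h ▸ List.mem_cons_self)
      have hxT : x ∉ T := fun h => hx (List.mem_cons_of_mem _ h)
      simp only [List.map_cons, List.prod_cons, List.length_cons]
      rw [← mul_assoc, hac x y hxy, neg_mul, mul_assoc, ih x hxT,
        mul_smul_comm, ← neg_smul, pow_succ]
      rw [mul_neg_one, neg_smul, neg_smul, mul_assoc]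

/-- Reduction: any product of the `e`'s equals an integer multiple of a duplicate-free
product, of length of the same parity; strictly shorter if there was a duplicate. -/
lemma aux_reduce (hac : ∀ i k : Fin r, i ≠ k → e i * e k = -(e k * e i))
    (hsq : ∀ i, e i * e i = -1) :
    ∀ (n : ℕ) (L : List (Fin r)), L.length ≤ n →
      ∃ (L' : List (Fin r)) (c : ℤ), L'.Nodup ∧ L' ⊆ L ∧ L'.length ≤ L.length ∧
        L'.length % 2 = L.length % 2 ∧ (¬ L.Nodup → L'.length < L.length) ∧
        (L.map e).prod = c • (L'.map e).prod := by
  intro n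
  induction n with
  | zero =>
      intro L hL
      have : L = [] := List.length_eq_zero_iff.mp (Nat.le_zero.mp hL)
      subst this
      exact ⟨[], 1, by simp⟩
  | succ n ih =>
      intro L hL
      by_cases hnd : L.Nodup
      · exact ⟨L, 1, hnd, fun _ h => h, le_rfl, rfl, fun h => absurd hnd h, by simp⟩
      · match L with
        | [] => simp at hnd
        | y :: T =>
          by_cases hyT : y ∈ T
          · -- cancel the pair of `y`'s
            obtain ⟨M, S, hMS, hyM⟩ := aux_mem_split_first hyT
            have hlen : (M ++ S).length ≤ n := by
              have := hL
              simp [hMS] at this ⊢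
              omega
            obtain ⟨L', c, h1, h2, h3, h4, _, h6⟩ := ih (M ++ S) hlen
            have hprod : ((y :: T).map e).prod = (-(-1 : ℤ) ^ M.length) • ((M ++ S).map e).prod := by
              subst hMS
              simp only [List.map_cons, List.prod_cons, List.map_append, List.prod_append]
              rw [← mul_assoc, aux_comm e hac M y hyM, smul_mul_assoc,
                mul_assoc, ← mul_assoc (e y) (e y), hsq y, neg_one_mul, mul_neg,
                smul_neg, ← neg_smul]
            refine ⟨L', (-(-1 : ℤ) ^ M.length) * c, h1, ?_, ?_, ?_, ?_, ?_⟩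
            · intro a ha
              have := h2 ha
              subst hMS
              simp only [List.mem_append] at this
              rcases this with h | h
              · exact List.mem_cons_of_mem _ (by simp [h])
              · exact List.mem_cons_of_mem _ (by simp [h])
            · subst hMS; simp at h3 ⊢; omega
            · subst hMS; simp at h4 ⊢; omega
            · intro _
              subst hMS; simp at h3 ⊢; omega
            · rw [hprod, h6, smul_smul]
          · -- y not repeated; recurse into the tail
            have hT : ¬ T.Nodup := by
              intro h
              exact hnd (List.nodup_cons.mpr ⟨hyT, h⟩)
            have hlen : T.length ≤ n := by simpa using hL
            obtain ⟨T', c, h1, h2, h3, h4, h5, h6⟩ := ih T hlen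
            refine ⟨y :: T', c, ?_, ?_, ?_, ?_, ?_, ?_⟩
            · exact List.nodup_cons.mpr ⟨fun h => hyT (h2 h), h1⟩
            · intro a ha
              rcases List.mem_cons.mp ha with h | h
              · simp [h]
              · exact List.mem_cons_of_mem _ (h2 h)
            · simp; omega
            · simp at h4 ⊢; omega
            · intro _
              have := h5 hT
              simp; omega
            · simp only [List.map_cons, List.prod_cons, h6, mul_smul_comm]

end aux

/-- For `j : ℝʳ → so(ℝᵐ)` of Heisenberg type with `r` odd and `{Z₁,…,Z_r}` the standard
orthonormal basis, if the index tuple `(α₁,…,α_r)` has a repetition then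
`Tr(j_{Z_{α₁}} ⋯ j_{Z_{α_r}}) = 0`. -/
theorem stmt11 (r m : ℕ) (hr : Odd r)
    (j : EuclideanSpace ℝ (Fin r) →ₗ[ℝ] Module.End ℝ (EuclideanSpace ℝ (Fin m)))
    (hskew : ∀ (z : EuclideanSpace ℝ (Fin r)) (x y : EuclideanSpace ℝ (Fin m)),
      ⟪j z x, y⟫ = -⟪x, j z y⟫)
    (hheis : ∀ z, j z * j z
      = -(‖z‖ ^ 2 : ℝ) • (1 : Module.End ℝ (EuclideanSpace ℝ (Fin m))))
    (α : Fin r → Fin r) (hα : ¬ Function.Injective α) :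
    LinearMap.trace ℝ (EuclideanSpace ℝ (Fin m))
      (List.ofFn fun i => j (EuclideanSpace.single (α i) 1)).prod = 0 := by
  set V := EuclideanSpace ℝ (Fin m)
  set J : Fin r → Module.End ℝ V := fun i => j (EuclideanSpace.single i 1) with hJ
  -- squares
  have hnorm : ∀ i : Fin r, ‖(EuclideanSpace.single i (1:ℝ))‖ = 1 := by
    intro i
    rw [EuclideanSpace.norm_single]
    norm_num
  have hsq : ∀ i, J i * J i = -1 := by
    intro i
    rw [hJ]
    simp only [hheis, hnorm]
    norm_num
  -- anticommutation
  have hac : ∀ i k : Fin r, i ≠ k → J i * J k = -(J k * J i) := by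
    intro i k hik
    have h2 : ‖(EuclideanSpace.single i (1:ℝ)) + EuclideanSpace.single k 1‖ ^ 2 = 2 := by
      rw [← real_inner_self_eq_norm_sq]
      rw [inner_add_add_self]
      rw [real_inner_self_eq_norm_sq, real_inner_self_eq_norm_sq, hnorm, hnorm]
      rw [EuclideanSpace.inner_single_left]
      simp [EuclideanSpace.single_apply, hik]
      norm_num [EuclideanSpace.inner_single_left, EuclideanSpace.single_apply, Ne.symm hik]
    have hexp := hheis (EuclideanSpace.single i 1 + EuclideanSpace.single k 1)
    rw [map_add, h2] at hexp
    have : (J i + J k) * (J i + J k)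
        = J i * J i + (J i * J k + J k * J i) + J k * J k := by noncomm_ring
    rw [this, hsq i, hsq k] at hexp
    have hX : J i * J k + J k * J i = 0 := by
      have h1 : (-1 : Module.End ℝ V) + (J i * J k + J k * J i) + -1
          = -(2:ℝ) • (1 : Module.End ℝ V) := hexp
      have h2 : (-(2:ℝ)) • (1 : Module.End ℝ V) = -1 + -1 := by
        rw [neg_smul, two_smul]
        abel
      rw [h2] at h1
      calc J i * J k + J k * J i
          = ((-1 : Module.End ℝ V) + (J i * J k + J k * J i) + -1)
            - (-1 + -1) := by abel
        _ = ((-1 : Module.End ℝ V) + -1) - (-1 + -1) := by rw [h1]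
        _ = 0 := by abel
    exact eq_neg_of_add_eq_zero_left hX
  -- rewrite the goal product
  have hre : (List.ofFn fun i => j (EuclideanSpace.single (α i) 1))
      = (List.ofFn α).map J := by
    rw [List.map_ofFn]; rfl
  rw [hre]
  obtain ⟨L', c, hnd, hsub, hle, hpar, hlt, hprod⟩ :=
    aux_reduce J hac hsq r (List.ofFn α) (by simp)
  have hnotnd : ¬ (List.ofFn α).Nodup := by
    rw [List.nodup_ofFn]; exact hα
  have hlenr : (List.ofFn α).length = r := by simp
  have hlen' : L'.length < r := by
    have := hlt hnotnd; omega
  have hodd : L'.length % 2 = 1 := by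
    have hr2 : r % 2 = 1 := Nat.odd_iff.mp hr
    omega
  have hk : ∃ k : Fin r, k ∉ L' := by
    by_contra h
    push_neg at h
    have huniv : L'.toFinset = Finset.univ :=
      Finset.eq_univ_iff_forall.mpr (fun k => List.mem_toFinset.mpr (h k))
    have hcard : L'.toFinset.card = L'.length := List.toFinset_card_of_nodup hnd
    rw [huniv, Finset.card_univ] at hcard
    simp at hcard
    omega
  obtain ⟨k, hk⟩ := hk
  set P := (L'.map J).prod with hP
  have hcm : J k * P = -(P * J k) := by
    rw [aux_comm J hac L' k hk, Odd.neg_one_pow (Nat.odd_iff.mpr hodd), neg_one_zsmul]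
  have hPeq : P = (J k * P) * J k := by
    rw [hcm, neg_mul, mul_assoc, hsq k, mul_neg_one, neg_neg]
  have htr : LinearMap.trace ℝ V P = - LinearMap.trace ℝ V P := by
    conv_lhs => rw [hPeq]
    rw [LinearMap.trace_mul_comm, ← mul_assoc, hsq k, neg_one_mul, map_neg]
  have htr0 : LinearMap.trace ℝ V P = 0 := by linarith
  rw [hprod, map_zsmul, htr0, smul_zero]
end

section
/- Let j, j' : ℝ^r → so(ℝ^m) be linear, skew-symmetric-valued maps, and suppose they are equivalent, i.e., there exist A ∈ O(m) and B ∈ O(r) with j'_Z = A j_{B⁻¹Z} A⁻¹ for all Z. Then for any indices, Σ_{α,β,γ} (Tr(j'_{Z_α} j'_{Z_β} j'_{Z_γ}))² = Σ_{α,β,γ} (Tr(j_{Z_α} j_{Z_β} j_{Z_γ}))², the sums taken over the standard orthonormal basis {Z_α} of ℝ^r. -/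
open scoped RealInnerProductSpace

private lemma key14 {r : ℕ} (c : Fin r → Fin r → ℝ)
    (hc : ∀ i i', ∑ α, c α i * c α i' = if i = i' then (1:ℝ) else 0)
    (u : Fin r → ℝ) :
    ∑ α, (∑ i, c α i * u i) ^ 2 = ∑ i, u i ^ 2 := by
  have h1 : ∀ α, (∑ i, c α i * u i) ^ 2
      = ∑ i, ∑ i', (c α i * c α i') * (u i * u i') := by
    intro α
    rw [sq, Finset.sum_mul_sum]
    exact Finset.sum_congr rfl fun i _ => Finset.sum_congr rfl fun i' _ => by ring
  simp_rw [h1]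
  rw [Finset.sum_comm]
  have h2 : ∀ i, ∑ α, ∑ i', (c α i * c α i') * (u i * u i')
      = ∑ i', (∑ α, c α i * c α i') * (u i * u i') := by
    intro i
    rw [Finset.sum_comm]
    simp [Finset.sum_mul]
  simp_rw [h2, hc]
  simp [Finset.mul_sum, ite_mul, sq]

private lemma orth14 {r : ℕ} (B : EuclideanSpace ℝ (Fin r) ≃ₗᵢ[ℝ] EuclideanSpace ℝ (Fin r))
    (i i' : Fin r) :
    ∑ α, (B.symm (EuclideanSpace.single α 1)) i * (B.symm (EuclideanSpace.single α 1)) i'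
      = if i = i' then (1:ℝ) else 0 := by
  have hco : ∀ (α : Fin r) (i : Fin r),
      (B.symm (EuclideanSpace.single α 1)) i = (B (EuclideanSpace.single i 1)) α := by
    intro α i
    have := B.inner_map_map (EuclideanSpace.single i 1) (B.symm (EuclideanSpace.single α 1))
    rw [B.apply_symm_apply] at this
    simpa [EuclideanSpace.inner_single_left, EuclideanSpace.inner_single_right] using this.symm
  simp_rw [hco]
  calc ∑ α, (B (EuclideanSpace.single i 1)) α * (B (EuclideanSpace.single i' 1)) α
      = ⟪B (EuclideanSpace.single i 1), B (EuclideanSpace.single i' 1)⟫ := by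
        rw [PiLp.inner_apply]
        simp only [RCLike.inner_apply, conj_trivial]
        exact Finset.sum_congr rfl fun _ _ => mul_comm _ _
    _ = ⟪(EuclideanSpace.single i (1:ℝ)), EuclideanSpace.single i' 1⟫ := B.inner_map_map _ _
    _ = if i = i' then (1:ℝ) else 0 := by
        simp [EuclideanSpace.inner_single_left, EuclideanSpace.single_apply, eq_comm]

/-- If `j, j' : ℝʳ → so(v)` are equivalent, i.e. `j'_Z = A j_{B⁻¹Z} A⁻¹` for some
`A ∈ O(v)`, `B ∈ O(r)`, then
`Σ_{α,β,γ} (Tr(j'_{Z_α} j'_{Z_β} j'_{Z_γ}))² = Σ_{α,β,γ} (Tr(j_{Z_α} j_{Z_β} j_{Z_γ}))²`,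
the sums over the standard orthonormal basis `{Z_α}` of `ℝʳ`. -/
theorem stmt14 {V : Type*}
    [NormedAddCommGroup V] [InnerProductSpace ℝ V] [FiniteDimensional ℝ V]
    (r : ℕ)
    (j j' : EuclideanSpace ℝ (Fin r) →ₗ[ℝ] Module.End ℝ V)
    (hskew : ∀ (z : EuclideanSpace ℝ (Fin r)) (x y : V), ⟪j z x, y⟫ = -⟪x, j z y⟫)
    (hskew' : ∀ (z : EuclideanSpace ℝ (Fin r)) (x y : V), ⟪j' z x, y⟫ = -⟪x, j' z y⟫)
    (A : V ≃ₗᵢ[ℝ] V) (B : EuclideanSpace ℝ (Fin r) ≃ₗᵢ[ℝ] EuclideanSpace ℝ (Fin r))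
    (hequiv : ∀ z, j' z
      = A.toLinearMap ∘ₗ j (B.symm z) ∘ₗ A.symm.toLinearMap) :
    ∑ α : Fin r, ∑ β : Fin r, ∑ γ : Fin r,
        (LinearMap.trace ℝ V
          (j' (EuclideanSpace.single α 1) * j' (EuclideanSpace.single β 1) *
            j' (EuclideanSpace.single γ 1))) ^ 2
      = ∑ α : Fin r, ∑ β : Fin r, ∑ γ : Fin r,
          (LinearMap.trace ℝ V
            (j (EuclideanSpace.single α 1) * j (EuclideanSpace.single β 1) *
              j (EuclideanSpace.single γ 1))) ^ 2 := by
  classical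
  set e : Fin r → EuclideanSpace ℝ (Fin r) := fun i => EuclideanSpace.single i 1 with he
  set t : Fin r → Fin r → Fin r → ℝ :=
    fun i k l => LinearMap.trace ℝ V (j (e i) * j (e k) * j (e l)) with ht
  set c : Fin r → Fin r → ℝ := fun α i => (B.symm (e α)) i with hcdef
  have hc : ∀ i i', ∑ α, c α i * c α i' = if i = i' then (1:ℝ) else 0 := fun i i' =>
    orth14 B i i'
  -- trace is conjugation invariant
  have hconj : ∀ a b d : EuclideanSpace ℝ (Fin r),
      LinearMap.trace ℝ V (j' a * j' b * j' d)
        = LinearMap.trace ℝ V (j (B.symm a) * j (B.symm b) * j (B.symm d)) := by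
    intro a b d
    have hmul : j' a * j' b * j' d
        = A.toLinearEquiv.conj (j (B.symm a) * j (B.symm b) * j (B.symm d)) := by
      ext x
      simp [hequiv, LinearEquiv.conj_apply, Module.End.mul_apply]
    rw [hmul, LinearMap.trace_conj']
  -- basis expansion
  have hbasis : ∀ x : EuclideanSpace ℝ (Fin r), x = ∑ i, x i • e i := by
    intro x
    refine PiLp.ext fun l => ?_
    rw [show (∑ i, x i • e i) l = ∑ i, (x i • e i) l from by rw [WithLp.ofLp_sum, Finset.sum_apply]]
    simp [he, EuclideanSpace.single_apply]
  -- trilinearity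
  have hw : ∀ y z w, LinearMap.trace ℝ V (j y * j z * j w)
      = ∑ l, w l * LinearMap.trace ℝ V (j y * j z * j (e l)) := by
    intro y z w
    conv_lhs => rw [hbasis w]
    simp [map_sum, Finset.mul_sum, mul_smul_comm, smul_eq_mul]
  have hz : ∀ y z l, LinearMap.trace ℝ V (j y * j z * j (e l))
      = ∑ k, z k * LinearMap.trace ℝ V (j y * j (e k) * j (e l)) := by
    intro y z l
    conv_lhs => rw [hbasis z]
    simp [map_sum, Finset.mul_sum, Finset.sum_mul, mul_smul_comm, smul_mul_assoc, smul_eq_mul]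
  have hy : ∀ y k l, LinearMap.trace ℝ V (j y * j (e k) * j (e l))
      = ∑ i, y i * t i k l := by
    intro y k l
    conv_lhs => rw [hbasis y]
    simp [map_sum, Finset.sum_mul, smul_mul_assoc, smul_eq_mul, ht]
  have htri : ∀ y z w, LinearMap.trace ℝ V (j y * j z * j w)
      = ∑ l, w l * ∑ k, z k * ∑ i, y i * t i k l := by
    intro y z w
    rw [hw]
    refine Finset.sum_congr rfl fun l _ => ?_
    rw [hz y z l]
    simp_rw [hy]
  -- put everything together
  have hLHS : ∀ α β γ : Fin r, LinearMap.trace ℝ V (j' (e α) * j' (e β) * j' (e γ))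
      = ∑ l, c γ l * ∑ k, c β k * ∑ i, c α i * t i k l := by
    intro α β γ
    rw [hconj, htri]
  calc ∑ α, ∑ β, ∑ γ,
        (LinearMap.trace ℝ V (j' (e α) * j' (e β) * j' (e γ))) ^ 2
      = ∑ α, ∑ β, ∑ γ, (∑ l, c γ l * ∑ k, c β k * ∑ i, c α i * t i k l) ^ 2 := by
        simp_rw [hLHS]
    _ = ∑ α, ∑ β, ∑ l, (∑ k, c β k * ∑ i, c α i * t i k l) ^ 2 := by
        refine Finset.sum_congr rfl fun α _ => Finset.sum_congr rfl fun β _ => ?_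
        exact key14 c hc _
    _ = ∑ α, ∑ l, ∑ β, (∑ k, c β k * ∑ i, c α i * t i k l) ^ 2 := by
        exact Finset.sum_congr rfl fun α _ => Finset.sum_comm
    _ = ∑ α, ∑ l, ∑ k, (∑ i, c α i * t i k l) ^ 2 := by
        refine Finset.sum_congr rfl fun α _ => Finset.sum_congr rfl fun l _ => ?_
        exact key14 c hc _
    _ = ∑ l, ∑ α, ∑ k, (∑ i, c α i * t i k l) ^ 2 := Finset.sum_comm
    _ = ∑ l, ∑ k, ∑ α, (∑ i, c α i * t i k l) ^ 2 :=
        Finset.sum_congr rfl fun l _ => Finset.sum_comm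
    _ = ∑ l, ∑ k, ∑ i, (t i k l) ^ 2 := by
        refine Finset.sum_congr rfl fun l _ => Finset.sum_congr rfl fun k _ => ?_
        exact key14 c hc _
    _ = ∑ l, ∑ i, ∑ k, (t i k l) ^ 2 :=
        Finset.sum_congr rfl fun l _ => Finset.sum_comm
    _ = ∑ i, ∑ l, ∑ k, (t i k l) ^ 2 := Finset.sum_comm
    _ = ∑ i, ∑ k, ∑ l, (t i k l) ^ 2 :=
        Finset.sum_congr rfl fun i _ => Finset.sum_comm
end

section
/- For j : z → so(v) of Heisenberg type with dim v = m, dim z = r, the Ricci operator of g(j) is -r/2 · Id on v and m/4 · Id on z. -/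
open scoped RealInnerProductSpace

section HeisenbergType

variable {V M : Type*} [NormedAddCommGroup V] [InnerProductSpace ℝ V] [AddCommGroup M] [Module ℝ M]
  {j : V →ₗ[ℝ] Module.End ℝ M} (hj : ∀ z, j z * j z = -(‖z‖ ^ 2 : ℝ) • (1 : Module.End ℝ M))
include hj

/-- Polarization of `j z ^ 2 = -‖z‖² • 1`, i.e. the Clifford relation. -/
theorem mul_add_mul_swap_eq_of_sq_eq_neg_norm_sq (z w : V) :
    j z * j w + j w * j z = (-(2 * ⟪z, w⟫)) • (1 : Module.End ℝ M) := by
  have hzw := hj (z + w)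
  rw [map_add, add_mul, mul_add, mul_add, hj z, hj w, norm_add_sq_real] at hzw
  calc j z * j w + j w * j z
      = (-(‖z‖ ^ 2 + 2 * ⟪z, w⟫ + ‖w‖ ^ 2)) • (1 : Module.End ℝ M)
          - (-(‖z‖ ^ 2 : ℝ)) • 1 - (-(‖w‖ ^ 2 : ℝ)) • 1 := by rw [← hzw]; abel
    _ = (-(2 * ⟪z, w⟫)) • (1 : Module.End ℝ M) := by rw [← sub_smul, ← sub_smul]; ring_nf

theorem trace_mul_eq_neg_finrank_mul_inner [Module.Free ℝ M] [Module.Finite ℝ M] (z w : V) :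
    LinearMap.trace ℝ M (j z * j w) = -(Module.finrank ℝ M : ℝ) * ⟪z, w⟫ := by
  have h := congrArg (LinearMap.trace ℝ M) (mul_add_mul_swap_eq_of_sq_eq_neg_norm_sq hj z w)
  rw [map_add, LinearMap.trace_mul_comm ℝ (j w), map_smul, LinearMap.trace_one,
    smul_eq_mul] at h
  linarith

theorem sum_mul_self_eq_neg_card_smul {ι : Type*} [Fintype ι] {b : ι → V}
    (hb : ∀ i, ‖b i‖ = 1) :
    ∑ i, j (b i) * j (b i) = -(Fintype.card ι : ℝ) • (1 : Module.End ℝ M) := by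
  simp only [hj, hb, one_pow, Finset.sum_const, Finset.card_univ, ← Nat.cast_smul_eq_nsmul ℝ,
    smul_smul]
  ring_nf

end HeisenbergType

theorem stmt18_general (m r : ℕ)
    (j : EuclideanSpace ℝ (Fin r) →ₗ[ℝ] Module.End ℝ (EuclideanSpace ℝ (Fin m)))
    (hheis : ∀ z, j z * j z
      = -(‖z‖ ^ 2 : ℝ) • (1 : Module.End ℝ (EuclideanSpace ℝ (Fin m)))) :
    ((1/2 : ℝ) • ∑ α : Fin r,
        j (EuclideanSpace.single α 1) * j (EuclideanSpace.single α 1)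
      = -((r : ℝ)/2) • (1 : Module.End ℝ (EuclideanSpace ℝ (Fin m))))
    ∧ (∀ Z W : EuclideanSpace ℝ (Fin r),
        -(1/4) * LinearMap.trace ℝ (EuclideanSpace ℝ (Fin m)) (j Z * j W)
          = ((m : ℝ)/4) * ⟪Z, W⟫) := by
  constructor
  · rw [sum_mul_self_eq_neg_card_smul hheis (fun α => by simp),
      smul_smul, Fintype.card_fin]
    ring_nf
  · intro Z W
    rw [trace_mul_eq_neg_finrank_mul_inner hheis, finrank_euclideanSpace_fin]
    ring

/-- For `j : z → so(v)` of Heisenberg type with `dim v = m`, `dim z = r`, the Ricci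
operator of `g(j)` is `-r/2 · Id` on `v` and `m/4 · Id` on `z`; i.e. `½J = -(r/2)·Id`
(where `J = Σ_α j_{Z_α}²`) and `ric(Z,W) = -¼Tr(j_Z j_W) = (m/4)⟨Z,W⟩`. -/
theorem stmt18 (m r : ℕ)
    (j : EuclideanSpace ℝ (Fin r) →ₗ[ℝ] Module.End ℝ (EuclideanSpace ℝ (Fin m)))
    (hskew : ∀ (z : EuclideanSpace ℝ (Fin r)) (x y : EuclideanSpace ℝ (Fin m)),
      ⟪j z x, y⟫ = -⟪x, j z y⟫)
    (hheis : ∀ z, j z * j z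
      = -(‖z‖ ^ 2 : ℝ) • (1 : Module.End ℝ (EuclideanSpace ℝ (Fin m)))) :
    ((1/2 : ℝ) • ∑ α : Fin r,
        j (EuclideanSpace.single α 1) * j (EuclideanSpace.single α 1)
      = -((r : ℝ)/2) • (1 : Module.End ℝ (EuclideanSpace ℝ (Fin m))))
    ∧ (∀ Z W : EuclideanSpace ℝ (Fin r),
        -(1/4) * LinearMap.trace ℝ (EuclideanSpace ℝ (Fin m)) (j Z * j W)
          = ((m : ℝ)/4) * ⟪Z, W⟫) :=
  stmt18_general m r j hheis
end
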